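/- For every nonnegative integer s and all 1 ≤ k ≤ n, [A^s]_{k,n} = (a_k/a_n)·B_{n,k}(φ^⟨s⟩), where B_{n,k}(F) denotes the partial Bell polynomial of a power series F with F(0) = 0, defined by B_{n,k}(F) = (n!/k!) times the coefficient of t^n in F(t)^k. -/

import Mathlib

open PowerSeries Finset

noncomputable section

/-- Product of two infinite matrices of complex numbers (indexed by positive integers,
upper triangular): `[A·B]_{k,n} = ∑_{j=k}^{n} [A]_{k,j}·[B]_{j,n}`. -/
def triMul (A B : ℕ → ℕ → ℂ) : ℕ → ℕ → ℂ :=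
  fun k n => ∑ j ∈ Finset.Icc k n, A k j * B j n

/-- The identity matrix. -/
def triId : ℕ → ℕ → ℂ := fun k n => if k = n then 1 else 0

/-- Powers of a matrix: `A^0 = I`, `A^{s+1} = A^s · A`. -/
def triPow (A : ℕ → ℕ → ℂ) : ℕ → ℕ → ℕ → ℂ
  | 0 => triId
  | s + 1 => triMul (triPow A s) A

/-- Composition `F ∘ G` of formal power series (intended for `G` with zero
constant coefficient): the coefficient of `t^n` is `∑_{j=0}^{n} F_j · [t^n](G^j)`. -/
def psComp (F G : PowerSeries ℂ) : PowerSeries ℂ :=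
  PowerSeries.mk fun n =>
    ∑ j ∈ Finset.range (n + 1), (PowerSeries.coeff j F) * (PowerSeries.coeff n (G ^ j))

/-- Iterated composition: `φ^⟨0⟩ = t`, `φ^⟨s+1⟩ = φ^⟨s⟩ ∘ φ`. -/
def iterComp (φ : PowerSeries ℂ) : ℕ → PowerSeries ℂ
  | 0 => PowerSeries.X
  | s + 1 => psComp (iterComp φ s) φ

/-- The partial Bell polynomial of a power series `F` with `F(0) = 0`:
`B_{n,k}(F) = (n!/k!)·[t^n](F(t)^k)`. -/
def bellPartial (F : PowerSeries ℂ) (n k : ℕ) : ℂ :=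
  (n.factorial : ℂ) / (k.factorial : ℂ) * PowerSeries.coeff n (F ^ k)

/-!
Conjugating by the diagonal matrix `diag(a_n)` reduces the claim to the Bell matrix
`[B_{n,k}(φ)]`. The truncated composition `psComp` is Mathlib's substitution
`PowerSeries.subst`, which is a ring homomorphism, so `(F ∘ G)^k = F^k ∘ G`. Reading off the
coefficient of `t^n` gives `B_{n,k}(F ∘ G) = ∑_{j=k}^{n} B_{j,k}(F) B_{n,j}(G)`, i.e. the Bell
matrix turns composition into matrix multiplication, and induction on `s` finishes the proof.
-/

lemma coeff_pow_eq_zero_of_lt {G : PowerSeries ℂ} (hG : constantCoeff G = 0)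
    {n d : ℕ} (h : n < d) : coeff n (G ^ d) = 0 :=
  X_pow_dvd_iff.mp (pow_dvd_pow_of_dvd (X_dvd_iff.mpr hG) d) n h

lemma coeff_psComp (F G : PowerSeries ℂ) (n : ℕ) :
    coeff n (psComp F G) = ∑ j ∈ range (n + 1), coeff j F * coeff n (G ^ j) :=
  coeff_mk _ _

lemma psComp_eq_subst {G : PowerSeries ℂ} (hG : constantCoeff G = 0) (F : PowerSeries ℂ) :
    psComp F G = F.subst G := by
  ext n
  rw [coeff_psComp, coeff_subst' (HasSubst.of_constantCoeff_zero' hG)]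
  refine (finsum_eq_sum_of_support_subset _ fun j hj => ?_).symm
  rw [coe_range, Set.mem_Iio, Nat.lt_succ_iff]
  by_contra! hnj
  exact hj (mul_eq_zero_of_right _ (coeff_pow_eq_zero_of_lt hG hnj))

lemma psComp_pow {G : PowerSeries ℂ} (hG : constantCoeff G = 0) (F : PowerSeries ℂ) (k : ℕ) :
    psComp F G ^ k = psComp (F ^ k) G := by
  rw [psComp_eq_subst hG, psComp_eq_subst hG, subst_pow (HasSubst.of_constantCoeff_zero' hG)]

lemma constantCoeff_psComp {F : PowerSeries ℂ} (hF : constantCoeff F = 0) (G : PowerSeries ℂ) :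
    constantCoeff (psComp F G) = 0 := by
  rw [← coeff_zero_eq_constantCoeff_apply, coeff_psComp]
  simp [hF]

lemma constantCoeff_iterComp (φ : PowerSeries ℂ) (s : ℕ) : constantCoeff (iterComp φ s) = 0 := by
  induction s with
  | zero => simp [iterComp]
  | succ s ih => exact constantCoeff_psComp ih φ

lemma bellPartial_X (n k : ℕ) : bellPartial X n k = if k = n then 1 else 0 := by
  split_ifs with h
  · subst h
    simp [bellPartial, coeff_X_pow, Nat.factorial_ne_zero]
  · simp [bellPartial, coeff_X_pow, Ne.symm h]

lemma bellPartial_psComp {F G : PowerSeries ℂ} (hF : constantCoeff F = 0)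
    (hG : constantCoeff G = 0) (n k : ℕ) :
    bellPartial (psComp F G) n k = ∑ j ∈ Icc k n, bellPartial F j k * bellPartial G n j := by
  have hrange : range (n + 1) = Icc 0 n := by ext; simp
  have hlow : ∀ j ∈ Icc 0 n, j ∉ Icc k n →
      (n.factorial / k.factorial : ℂ) * (coeff j (F ^ k) * coeff n (G ^ j)) = 0 := by
    intro j hj hjk
    simp only [mem_Icc] at hj hjk
    rw [coeff_pow_eq_zero_of_lt hF (by omega), zero_mul, mul_zero]
  rw [bellPartial, psComp_pow hG, coeff_psComp, mul_sum, hrange,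
    ← sum_subset (Icc_subset_Icc_left (Nat.zero_le k)) hlow]
  refine sum_congr rfl fun j _ => ?_
  have hj : (j.factorial : ℂ) ≠ 0 := Nat.cast_ne_zero.mpr j.factorial_ne_zero
  have hk : (k.factorial : ℂ) ≠ 0 := Nat.cast_ne_zero.mpr k.factorial_ne_zero
  simp only [bellPartial]
  field_simp

theorem stmt11_general (a : ℕ → ℂ) (ha : ∀ n, 1 ≤ n → a n ≠ 0)
    (φ : PowerSeries ℂ)
    (hφ0 : constantCoeff φ = 0)
    (A : ℕ → ℕ → ℂ)
    (hA : ∀ k n, 1 ≤ k → k ≤ n → A k n = a k / a n * bellPartial φ n k)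
    (s : ℕ) (k n : ℕ) (hk : 1 ≤ k) (hkn : k ≤ n) :
    triPow A s k n = a k / a n * bellPartial (iterComp φ s) n k := by
  induction s generalizing k n with
  | zero =>
    rw [triPow, triId, iterComp, bellPartial_X]
    split_ifs with h
    · rw [h, div_self (ha n (h ▸ hk)), mul_one]
    · rw [mul_zero]
  | succ s ih =>
    rw [triPow, triMul, iterComp, bellPartial_psComp (constantCoeff_iterComp φ s) hφ0, mul_sum]
    refine sum_congr rfl fun j hj => ?_
    obtain ⟨hkj, hjn⟩ := mem_Icc.mp hj
    have haj : a j ≠ 0 := ha j (hk.trans hkj)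
    have han : a n ≠ 0 := ha n (hk.trans hkn)
    rw [ih k j hk hkj, hA j n (hk.trans hkj) hjn]
    field_simp

/-- Corollary: for the matrix `[A]_{k,n} = (a_k/a_n)·B_{n,k}(φ)` one has
`[A^s]_{k,n} = (a_k/a_n)·B_{n,k}(φ^⟨s⟩)`. -/
theorem stmt11 (a : ℕ → ℂ) (ha : ∀ n, 1 ≤ n → a n ≠ 0)
    (φ : PowerSeries ℂ)
    (hφ0 : constantCoeff φ = 0)
    (hφ1 : constantCoeff (derivativeFun φ) ≠ 0)
    (A : ℕ → ℕ → ℂ)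
    (hAtri : ∀ k n, n < k → A k n = 0)
    (hA : ∀ k n, 1 ≤ k → k ≤ n → A k n = a k / a n * bellPartial φ n k)
    (s : ℕ) (k n : ℕ) (hk : 1 ≤ k) (hkn : k ≤ n) :
    triPow A s k n = a k / a n * bellPartial (iterComp φ s) n k :=
  stmt11_general a ha φ hφ0 A hA s k n hk hkn
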